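/- Let z ∈ ℂ with 0 < Re z < 1. For r > 0 set A_r(r) = ∫_{φ = -3π/4}^{π/4} f_r(r·exp(iφ))·(i·r·exp(iφ)) dφ, the integral of f_r along the circular arc of radius r centered at the origin between angles -3π/4 and π/4. Then r^(1 - Re z)·‖A_r(r)‖ tends to ‖exp(i(z-1)π/4) - exp(-3i(z-1)π/4)‖/(2π·‖z - 1‖) as r → 0⁺, and this limit is positive (since exp(iπ(z-1)) ≠ 1 for 0 < Re z < 1); so the arc integral diverges like r^(Re z - 1) as r → 0. -/

import Mathlib

open Filter

/-- The right integrand `f_r(w) = w^(z-1)·exp(πi w²)/(exp(πi w) - exp(-πi w))`. -/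
noncomputable def fr (z w : ℂ) : ℂ :=
  w ^ (z - 1) * Complex.exp (Real.pi * Complex.I * w ^ 2) /
    (Complex.exp (Real.pi * Complex.I * w) - Complex.exp (-(Real.pi * Complex.I) * w))

/-- The integral of `f_r` along the circular arc of radius `r` centered at the
origin between angles `-3π/4` and `π/4`. -/
noncomputable def arcR (z : ℂ) (r : ℝ) : ℂ :=
  ∫ φ in (-(3 * Real.pi / 4))..(Real.pi / 4),
    fr z (r * Complex.exp (φ * Complex.I)) * (Complex.I * r * Complex.exp (φ * Complex.I))

/-!
On the arc `w = r e^{iφ}`, `-π < φ ≤ π`, the principal power splits as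
`w^(z-1) = r^(z-1) e^{i(z-1)φ}`, while `w·exp(πi w²)/(exp(πi w) - exp(-πi w))` has a removable
singularity at `0` with value `1/(2πi)`. So `r^(1-z)·A_r(r)` is an integral over the arc of a
function jointly continuous in `(r, φ)` for `r` near `0`, and tends to
`(1/2π) ∫_{-3π/4}^{π/4} e^{i(z-1)φ} dφ`. This limit is nonzero since `exp(iπ(z-1)) = 1` would
force `z - 1 ∈ 2ℤ`, which `0 < Re z < 1` excludes.
-/

open Complex
open scoped Real

theorem Complex.ofReal_mul_exp_mul_I_cpow {r : ℝ} (hr : 0 < r) {φ : ℝ}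
    (hφ : φ ∈ Set.Ioc (-π) π) (s : ℂ) :
    ((r : ℂ) * exp (φ * I)) ^ s = (r : ℂ) ^ s * exp (s * (φ * I)) := by
  have hr' : (r : ℂ) ≠ 0 := ofReal_ne_zero.2 hr.ne'
  rw [cpow_def_of_ne_zero (mul_ne_zero hr' (exp_ne_zero _)), log_ofReal_mul hr (exp_ne_zero _),
    log_exp (by simpa using hφ.1) (by simpa using hφ.2), cpow_def_of_ne_zero hr', ← exp_add,
    ofReal_log hr.le]
  ring_nf

theorem continuousOn_intervalIntegral_mul_comp_arc {g : ℂ → ℂ} {R : ℝ}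
    (hg : ContinuousOn g (Metric.closedBall 0 R)) {h : ℝ → ℂ} (hh : Continuous h) (a b : ℝ) :
    ContinuousOn (fun r : ℝ => ∫ φ in a..b, h φ * g (r * exp (φ * I)))
      (Metric.closedBall 0 R) := by
  rw [continuousOn_iff_continuous_domRestrict]
  refine intervalIntegral.continuous_parametric_intervalIntegral_of_continuous'
    (f := fun (r : Metric.closedBall (0 : ℝ) R) φ => h φ * g (r * exp (φ * I))) ?_ a b
  refine (hh.comp continuous_snd).mul (hg.comp_continuous (by fun_prop) fun p => ?_)
  have hp := p.1.2
  simp only [Metric.mem_closedBall, dist_zero_right, Real.norm_eq_abs] at hp ⊢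
  rwa [norm_mul, norm_exp_ofReal_mul_I, norm_real, Real.norm_eq_abs, mul_one]

/-- `w · f_r(w) / w^(z-1)`, with the denominator written through `dslope` so that the
removable singularity at `0` is filled in. -/
noncomputable def frRegular (w : ℂ) : ℂ :=
  exp (π * I * w ^ 2) * exp (π * I * w) / dslope (fun u => exp (2 * π * I * u)) 0 w

theorem hasDerivAt_exp_two_pi_I_mul (u : ℂ) :
    HasDerivAt (fun u => exp (2 * π * I * u)) (2 * π * I * exp (2 * π * I * u)) u := by
  simpa [mul_comm] using ((hasDerivAt_id u).const_mul (2 * π * I)).cexp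

theorem dslope_exp_two_pi_I_mul_ne_zero {w : ℂ} (hw : ‖w‖ < 1) :
    dslope (fun u => exp (2 * π * I * u)) 0 w ≠ 0 := by
  rcases eq_or_ne w 0 with rfl | hw0
  · rw [dslope_same, (hasDerivAt_exp_two_pi_I_mul 0).deriv]
    simp [Real.pi_ne_zero]
  · rw [dslope_of_ne _ hw0, slope_def_field, div_ne_zero_iff, sub_zero, mul_zero, exp_zero,
      sub_ne_zero, Ne, exp_eq_one_iff]
    refine ⟨fun ⟨n, hn⟩ => hw0 ?_, hw0⟩
    have hwn : w = n := mul_left_cancel₀ (by simp [Real.pi_ne_zero]) (hn.trans (by ring))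
    have hn : |n| < 1 := by exact_mod_cast (by simpa [hwn] using hw : |(n : ℝ)| < 1)
    rw [hwn, show n = 0 by rw [abs_lt] at hn; omega, Int.cast_zero]

theorem continuousOn_frRegular : ContinuousOn frRegular (Metric.ball 0 1) := by
  have hd : Continuous (dslope (fun u => exp (2 * π * I * u)) 0) :=
    (continuousOn_dslope univ_mem).2
      ⟨by fun_prop, (hasDerivAt_exp_two_pi_I_mul 0).differentiableAt⟩ |> continuousOn_univ.1
  have hnum : Continuous fun w : ℂ => exp (π * I * w ^ 2) * exp (π * I * w) := by fun_prop
  exact hnum.continuousOn.div hd.continuousOn fun w hw =>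
    dslope_exp_two_pi_I_mul_ne_zero (mem_ball_zero_iff.1 hw)

theorem frRegular_zero : frRegular 0 = (2 * π * I)⁻¹ := by
  simp [frRegular, dslope_same, (hasDerivAt_exp_two_pi_I_mul 0).deriv]

theorem fr_mul_I_mul (z : ℂ) {w : ℂ} (hw : w ≠ 0) :
    fr z w * (I * w) = I * w ^ (z - 1) * frRegular w := by
  have hsplit : exp (2 * π * I * w) - 1 =
      exp (π * I * w) * (exp (π * I * w) - exp (-(π * I) * w)) := by
    rw [mul_sub, ← exp_add, ← exp_add, neg_mul, add_neg_cancel, exp_zero]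
    ring_nf
  rw [fr, frRegular, dslope_of_ne _ hw, slope_def_field, mul_zero, exp_zero, sub_zero, hsplit]
  rcases eq_or_ne (exp (π * I * w) - exp (-(π * I) * w)) 0 with hD | hD
  · rw [hD]; simp
  · field_simp

noncomputable def arcRRescaled (z : ℂ) (r : ℝ) : ℂ :=
  ∫ φ in (-(3 * π / 4))..(π / 4), I * exp ((z - 1) * (φ * I)) * frRegular (r * exp (φ * I))

theorem arcR_eq_cpow_mul_arcRRescaled (z : ℂ) {r : ℝ} (hr : 0 < r) :
    arcR z r = (r : ℂ) ^ (z - 1) * arcRRescaled z r := by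
  rw [arcR, arcRRescaled, ← intervalIntegral.integral_const_mul]
  refine intervalIntegral.integral_congr fun φ hφ => ?_
  rw [Set.uIcc_of_le (by linarith [Real.pi_pos])] at hφ
  have hw : (r : ℂ) * exp (φ * I) ≠ 0 := mul_ne_zero (ofReal_ne_zero.2 hr.ne') (exp_ne_zero _)
  rw [mul_assoc I, fr_mul_I_mul z hw, ofReal_mul_exp_mul_I_cpow hr
    ⟨by linarith [hφ.1, Real.pi_pos], by linarith [hφ.2, Real.pi_pos]⟩]
  ring

theorem rpow_mul_norm_arcR (z : ℂ) {r : ℝ} (hr : 0 < r) :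
    r ^ (1 - z.re) * ‖arcR z r‖ = ‖arcRRescaled z r‖ := by
  rw [arcR_eq_cpow_mul_arcRRescaled z hr, norm_mul, norm_cpow_eq_rpow_re_of_pos hr, ← mul_assoc,
    ← Real.rpow_add hr, sub_re, one_re, show 1 - z.re + (z.re - 1) = 0 by ring, Real.rpow_zero,
    one_mul]

theorem tendsto_arcRRescaled (z : ℂ) :
    Tendsto (arcRRescaled z) (nhdsWithin 0 (Set.Ioi 0)) (nhds (arcRRescaled z 0)) := by
  have hcont := continuousOn_intervalIntegral_mul_comp_arc
    (continuousOn_frRegular.mono (Metric.closedBall_subset_ball (by norm_num : (1 / 2 : ℝ) < 1)))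
    (by fun_prop : Continuous fun φ : ℝ => I * exp ((z - 1) * (φ * I))) (-(3 * π / 4)) (π / 4)
  exact ((hcont 0 (Metric.mem_closedBall_self (by norm_num))).continuousAt
    (Metric.closedBall_mem_nhds 0 (by norm_num))).tendsto.mono_left nhdsWithin_le_nhds

theorem arcRRescaled_zero (z : ℂ) (hz : z - 1 ≠ 0) :
    arcRRescaled z 0 = (exp (I * (z - 1) * π / 4) - exp (-(3 * I * (z - 1) * π) / 4)) /
      (2 * π * (z - 1) * I) := by
  have hc : (z - 1) * I ≠ 0 := mul_ne_zero hz I_ne_zero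
  have hint : ∫ φ in (-(3 * π / 4))..(π / 4), exp ((z - 1) * I * φ) =
      (exp (I * (z - 1) * π / 4) - exp (-(3 * I * (z - 1) * π) / 4)) / ((z - 1) * I) := by
    rw [integral_exp_mul_complex hc]
    push_cast
    ring_nf
  have hintegrand (φ : ℝ) : I * exp ((z - 1) * (φ * I)) * (2 * π * I)⁻¹ =
      exp ((z - 1) * I * φ) * (2 * π : ℂ)⁻¹ := by
    field_simp
  simp only [arcRRescaled, ofReal_zero, zero_mul, frRegular_zero, hintegrand]
  rw [intervalIntegral.integral_mul_const, hint]
  field_simp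

theorem sub_one_ne_two_mul_intCast {z : ℂ} (h0 : 0 < z.re) (h1 : z.re < 1) (n : ℤ) :
    z - 1 ≠ 2 * n := by
  intro h
  have hre : z.re - 1 = 2 * n := by simpa using congrArg re h
  have hlo : ((-1 : ℤ) : ℝ) < ((2 * n : ℤ) : ℝ) := by push_cast; linarith
  have hhi : ((2 * n : ℤ) : ℝ) < ((0 : ℤ) : ℝ) := by push_cast; linarith
  rw [Int.cast_lt] at hlo hhi
  omega

theorem exp_ne_exp_of_re_mem_Ioo {z : ℂ} (h0 : 0 < z.re) (h1 : z.re < 1) :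
    exp (I * (z - 1) * π / 4) ≠ exp (-(3 * I * (z - 1) * π) / 4) := by
  rw [Ne, exp_eq_exp_iff_exists_int]
  rintro ⟨n, hn⟩
  refine sub_one_ne_two_mul_intCast h0 h1 n (mul_left_cancel₀ (a := π * I) ?_ ?_)
  · simp [Real.pi_ne_zero]
  · linear_combination hn

/-- Paper's Lemma 3.2 (right arc C̃_rc): the arc integral of `f_r` diverges like
`r^(Re z - 1)` as `r → 0⁺`; more precisely `r^(1 - Re z)·‖A_r(r)‖` tends to
`‖exp(i(z-1)π/4) - exp(-3i(z-1)π/4)‖/(2π‖z-1‖)`, a positive limit. -/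
theorem fr_arc_singularity (z : ℂ) (h0 : 0 < z.re) (h1 : z.re < 1) :
    Tendsto (fun r : ℝ => r ^ (1 - z.re) * ‖arcR z r‖)
      (nhdsWithin 0 (Set.Ioi 0))
      (nhds (‖Complex.exp (Complex.I * (z - 1) * Real.pi / 4) -
          Complex.exp (-(3 * Complex.I * (z - 1) * Real.pi) / 4)‖ /
        (2 * Real.pi * ‖z - 1‖))) ∧
    0 < ‖Complex.exp (Complex.I * (z - 1) * Real.pi / 4) -
          Complex.exp (-(3 * Complex.I * (z - 1) * Real.pi) / 4)‖ /
        (2 * Real.pi * ‖z - 1‖) := by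
  have hz : z - 1 ≠ 0 := by simpa using sub_one_ne_two_mul_intCast h0 h1 0
  have hlimit : ‖arcRRescaled z 0‖ = ‖exp (I * (z - 1) * π / 4) -
      exp (-(3 * I * (z - 1) * π) / 4)‖ / (2 * π * ‖z - 1‖) := by
    rw [arcRRescaled_zero z hz, norm_div, norm_mul, norm_mul, norm_mul, norm_I, mul_one,
      Complex.norm_two, norm_real, Real.norm_of_nonneg Real.pi_pos.le]
  refine ⟨?_, ?_⟩
  · rw [← hlimit]
    exact (tendsto_arcRRescaled z).norm.congr'
      (eventually_nhdsWithin_of_forall fun r hr => (rpow_mul_norm_arcR z hr).symm)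
  · have := norm_pos_iff.2 hz
    have := norm_pos_iff.2 (sub_ne_zero.2 (exp_ne_exp_of_re_mem_Ioo h0 h1))
    positivity
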